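/- Under the same hypotheses, and additionally d_min > 0, the sharper upper bound holds: q ≤ [log N − log(c + (N−c)(d_min/d_max)^{q_0})] / log(d_max/λ), where q_0 = log(N/c)/log(d_max/λ) is the crude upper bound; moreover this sharper bound is strictly less than q_0. -/
import Mathlib


/-- Sharper upper bound on the spectral degree exponent when `d_min > 0`:
`q ≤ [log N − log(c + (N−c)(d_min/d_max)^{q₀})] / log(d_max/λ) < q₀`,
where `q₀ = log(N/c)/log(d_max/λ)` is the crude upper bound. -/
theorem sde_sharper_upper_bound (N c : ℕ) (hN : 2 ≤ N) (hc : 1 ≤ c) (hcN : c < N)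
    (d : Fin N → ℝ) (hpos : ∀ i, 0 < d i)
    (hsorted : ∀ i j : Fin N, i ≤ j → d j ≤ d i)
    (dmax : ℝ) (hdmax : dmax = d ⟨0, by omega⟩)
    (hmult : ∀ i : Fin N, (i : ℕ) < c → d i = dmax)
    (hlt : ∀ i : Fin N, c ≤ (i : ℕ) → d i < dmax)
    (dmin : ℝ) (hdmin : dmin = d ⟨N - 1, by omega⟩) (hdminpos : 0 < dmin)
    (lam : ℝ) (hlow : Real.sqrt ((1 / (N : ℝ)) * ∑ i, d i ^ (2 : ℝ)) ≤ lam)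
    (hhigh : lam < dmax)
    (q : ℝ) (hq2 : 2 ≤ q) (hsol : lam ^ q = (1 / (N : ℝ)) * ∑ i, d i ^ q)
    (q0 : ℝ) (hq0 : q0 = Real.log ((N : ℝ) / c) / Real.log (dmax / lam)) :
    q ≤ (Real.log N - Real.log ((c : ℝ) + ((N : ℝ) - c) * (dmin / dmax) ^ q0)) /
          Real.log (dmax / lam) ∧
      (Real.log N - Real.log ((c : ℝ) + ((N : ℝ) - c) * (dmin / dmax) ^ q0)) /
          Real.log (dmax / lam) < q0 := by
  classical
  have hNpos : (0:ℝ) < N := by positivity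
  have hcpos : (0:ℝ) < c := by exact_mod_cast hc
  have hdmaxpos : 0 < dmax := hdmax ▸ hpos _
  have hlampos : 0 < lam := by
    refine lt_of_lt_of_le ?_ hlow
    apply Real.sqrt_pos.mpr
    have : (0:ℝ) < ∑ i, d i ^ (2:ℝ) :=
      Finset.sum_pos (fun i _ => Real.rpow_pos_of_pos (hpos i) _)
        (by simp [Finset.univ_nonempty_iff]; exact Fin.pos_iff_nonempty.mp (by omega))
    positivity
  set L := Real.log (dmax / lam) with hL
  have hLpos : 0 < L := Real.log_pos ((one_lt_div hlampos).mpr hhigh)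
  have hLeq : L = Real.log dmax - Real.log lam :=
    Real.log_div (ne_of_gt hdmaxpos) (ne_of_gt hlampos)
  have hq0pos : 0 < q0 := by
    rw [hq0]
    exact div_pos (Real.log_pos ((one_lt_div hcpos).mpr (by exact_mod_cast hcN))) hLpos
  have hNc1 : c ≤ N - 1 := by omega
  have hdminle : ∀ i : Fin N, dmin ≤ d i := by
    intro i
    rw [hdmin]
    exact hsorted i ⟨N - 1, by omega⟩ (by simp [Fin.le_def]; omega)
  have hdminlt : dmin < dmax := by
    rw [hdmin]; exact hlt ⟨N - 1, by omega⟩ (by simpa using hNc1)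
  set r : ℝ := (dmin / dmax) ^ q0 with hr
  have hrpos : 0 < r := Real.rpow_pos_of_pos (div_pos hdminpos hdmaxpos) _
  -- the key deduction from a lower bound on the sum
  have key : ∀ B : ℝ, 0 < B → B * dmax ^ q ≤ (N:ℝ) * lam ^ q →
      q ≤ (Real.log N - Real.log B) / L := by
    intro B hB hle
    rw [le_div_iff₀ hLpos]
    have h1 := Real.log_le_log (by positivity) hle
    rw [Real.log_mul (ne_of_gt hB) (ne_of_gt (Real.rpow_pos_of_pos hdmaxpos q)),
      Real.log_mul (ne_of_gt hNpos) (ne_of_gt (Real.rpow_pos_of_pos hlampos q)),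
      Real.log_rpow hdmaxpos, Real.log_rpow hlampos] at h1
    rw [hLeq]
    nlinarith
  -- rewrite hsol
  have hsum_eq : (N:ℝ) * lam ^ q = ∑ i, d i ^ q := by
    rw [hsol]; field_simp
  -- sum splitting
  have hcard : (Finset.univ.filter (fun i : Fin N => (i:ℕ) < c)).card = c := by
    rw [Finset.card_filter]
    rw [Fin.sum_univ_eq_sum_range (fun i => if i < c then 1 else 0)]
    rw [← Finset.card_filter]
    have : (Finset.range N).filter (fun x => x < c) = Finset.range c := by
      ext x; simp; omega
    rw [this, Finset.card_range]
  have hcard2 : (Finset.univ.filter (fun i : Fin N => ¬ (i:ℕ) < c)).card = N - c := by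
    have h := Finset.card_filter_add_card_filter_not (s := (Finset.univ : Finset (Fin N)))
      (p := fun i : Fin N => (i:ℕ) < c)
    simp only [Finset.card_univ, Fintype.card_fin] at h
    omega
  have hsplit : ∑ i, d i ^ q =
      (∑ i ∈ Finset.univ.filter (fun i : Fin N => (i:ℕ) < c), d i ^ q) +
      ∑ i ∈ Finset.univ.filter (fun i : Fin N => ¬ (i:ℕ) < c), d i ^ q :=
    (Finset.sum_filter_add_sum_filter_not _ _ _).symm
  have hhead : (∑ i ∈ Finset.univ.filter (fun i : Fin N => (i:ℕ) < c), d i ^ q)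
      = (c:ℝ) * dmax ^ q := by
    rw [Finset.sum_congr rfl (fun i hi => by
      rw [hmult i (Finset.mem_filter.mp hi).2]), Finset.sum_const, hcard, nsmul_eq_mul]
  -- crude bound q ≤ q0
  have hq0eq : q0 = (Real.log N - Real.log c) / L := by
    rw [hq0, Real.log_div (ne_of_gt hNpos) (ne_of_gt hcpos)]
  have htail_nonneg : 0 ≤ ∑ i ∈ Finset.univ.filter (fun i : Fin N => ¬ (i:ℕ) < c), d i ^ q :=
    Finset.sum_nonneg fun i _ => (Real.rpow_pos_of_pos (hpos i) q).le
  have hqq0 : q ≤ q0 := by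
    rw [hq0eq]
    refine key c hcpos ?_
    rw [hsum_eq, hsplit, hhead]
    linarith
  -- tail bound
  have htail : ((N:ℝ) - c) * (dmax ^ q * r) ≤
      ∑ i ∈ Finset.univ.filter (fun i : Fin N => ¬ (i:ℕ) < c), d i ^ q := by
    have hterm : ∀ i ∈ Finset.univ.filter (fun i : Fin N => ¬ (i:ℕ) < c),
        dmax ^ q * r ≤ d i ^ q := by
      intro i hi
      have hic : c ≤ (i:ℕ) := by
        have := (Finset.mem_filter.mp hi).2; omega
      have hdi : d i < dmax := hlt i hic
      have hx0 : 0 < d i / dmax := div_pos (hpos i) hdmaxpos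
      have hx1 : d i / dmax ≤ 1 := (div_le_one hdmaxpos).mpr hdi.le
      have hbase : dmin / dmax ≤ d i / dmax := by gcongr; exact hdminle i
      have h2 : r ≤ (d i / dmax) ^ q0 :=
        Real.rpow_le_rpow (div_pos hdminpos hdmaxpos).le hbase hq0pos.le
      have h3 : (d i / dmax) ^ q0 ≤ (d i / dmax) ^ q :=
        Real.rpow_le_rpow_of_exponent_ge hx0 hx1 hqq0
      have h4 : (d i / dmax) ^ q = d i ^ q / dmax ^ q :=
        Real.div_rpow (hpos i).le hdmaxpos.le q
      have h5 : r ≤ d i ^ q / dmax ^ q := by rw [← h4]; linarith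
      calc dmax ^ q * r ≤ dmax ^ q * (d i ^ q / dmax ^ q) := by
            exact mul_le_mul_of_nonneg_left h5 (Real.rpow_pos_of_pos hdmaxpos q).le
        _ = d i ^ q := by
            field_simp
    calc ((N:ℝ) - c) * (dmax ^ q * r)
        = ((Finset.univ.filter (fun i : Fin N => ¬ (i:ℕ) < c)).card : ℝ) * (dmax ^ q * r) := by
          rw [hcard2]; push_cast [Nat.cast_sub hcN.le]; ring_nf
      _ = ∑ _i ∈ Finset.univ.filter (fun i : Fin N => ¬ (i:ℕ) < c), dmax ^ q * r := by
          rw [Finset.sum_const, nsmul_eq_mul]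
      _ ≤ _ := Finset.sum_le_sum hterm
  -- sharper bound
  set S : ℝ := (c:ℝ) + ((N:ℝ) - c) * r with hS
  have hSpos : 0 < S := by
    have : (0:ℝ) < (N:ℝ) - c := by
      have : (c:ℝ) < N := by exact_mod_cast hcN
      linarith
    positivity
  have hmain : q ≤ (Real.log N - Real.log S) / L := by
    refine key S hSpos ?_
    rw [hsum_eq, hsplit, hhead]
    have hSe : S * dmax ^ q = (c:ℝ) * dmax ^ q + ((N:ℝ) - c) * (dmax ^ q * r) := by
      rw [hS]; ring
    rw [hSe]
    linarith
  refine ⟨hmain, ?_⟩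
  rw [hq0eq]
  refine (div_lt_div_iff_of_pos_right hLpos).mpr ?_
  have hcS : (c:ℝ) < S := by
    have h1 : (0:ℝ) < ((N:ℝ) - c) * r := by
      have : (c:ℝ) < N := by exact_mod_cast hcN
      have : (0:ℝ) < (N:ℝ) - c := by linarith
      positivity
    rw [hS]; linarith
  have := Real.log_lt_log hcpos hcS
  linarith
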